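/- Let m > 0 and j ∈ ℕ. For every Schwartz function f on ℝ the function λ ↦ (λ² − m²)^{(2j+1)/4} f̂(λ) is square-integrable on (m, ∞), and the set of all such functions, as f ranges over all (complex-valued) Schwartz functions on ℝ, is dense in L²((m,∞), ℂ) with respect to Lebesgue measure. Here f̂ denotes the Fourier transform of f. -/

import Mathlib

/-!
On `(m, ∞)` the weight satisfies `((λ² − m²)^((2j+1)/4))² ≤ λ^(2j+1)`, so square integrability
follows from the rapid decay of `f̂`. The functions obtained form a complex subspace of `L²`, so
density amounts to its orthogonal complement being trivial. Every real test function `φ`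
supported in `(m, ∞)` is attained: `(λ² − m²)^(-(2j+1)/4) φ` is again smooth with compact
support, hence it is `f̂` for a Schwartz function `f`. An element orthogonal to the subspace thus
integrates to zero against all such `φ`, and vanishes a.e. by the fundamental lemma of the
calculus of variations.
-/

open MeasureTheory

noncomputable section

def Zfun (m : ℝ) (j : ℕ) (f : SchwartzMap ℝ ℂ) : ℝ → ℂ := fun lam =>
  (((lam ^ 2 - m ^ 2) ^ ((2 * (j : ℝ) + 1) / 4) : ℝ) : ℂ) * Fourier.fourierIntegral Real.fourierChar volume (⇑f) lam

open Set Filter FourierTransform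
open scoped ContDiff SchwartzMap

theorem Submodule.dense_of_forall_contDiff_mem {E 𝕜 : Type*} [NormedAddCommGroup E]
    [NormedSpace ℝ E] [FiniteDimensional ℝ E] [MeasurableSpace E] [BorelSpace E] [RCLike 𝕜]
    {μ : Measure E} [IsLocallyFiniteMeasure μ] {U : Set E} (hU : IsOpen U)
    (S : Submodule 𝕜 (Lp 𝕜 2 (μ.restrict U)))
    (hS : ∀ φ : E → ℝ, ContDiff ℝ ∞ φ → HasCompactSupport φ → tsupport φ ⊆ U →
      ∃ v ∈ S, v =ᵐ[μ.restrict U] fun x => (φ x : 𝕜)) :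
    Dense (S : Set (Lp 𝕜 2 (μ.restrict U))) := by
  rw [Submodule.dense_iff_topologicalClosure_eq_top, Submodule.topologicalClosure_eq_top_iff,
    Submodule.eq_bot_iff]
  intro g hg
  have hconj : ∀ᵐ x ∂μ, x ∈ U → star (g x) = 0 := by
    refine hU.ae_eq_zero_of_integral_contDiff_smul_eq_zero
      (locallyIntegrableOn_of_locallyIntegrable_restrict
        ((Lp.memLp g).star.locallyIntegrable one_le_two)) fun φ hφ hφc hφU => ?_
    obtain ⟨v, hvS, hv⟩ := hS φ hφ hφc hφU
    have hφU' : ∀ x ∉ U, φ x • star (g x) = 0 := fun x hx => by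
      rw [image_eq_zero_of_notMem_tsupport fun h => hx (hφU h), zero_smul]
    rw [← setIntegral_eq_integral_of_forall_compl_eq_zero hφU',
      ← Submodule.inner_left_of_mem_orthogonal hvS hg, MeasureTheory.L2.inner_def]
    refine integral_congr_ae ?_
    filter_upwards [hv] with x hx
    rw [hx, RCLike.real_smul_eq_coe_mul, mul_comm, RCLike.inner_apply', starRingEnd_apply]
  rw [Lp.eq_zero_iff_ae_eq_zero]
  filter_upwards [(ae_restrict_iff' hU.measurableSet).2 hconj] with x hx
  exact star_eq_zero.1 hx

theorem SchwartzMap.memLp_two_restrict_of_sq_norm_le {D V W : Type*} [NormedAddCommGroup D]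
    [NormedSpace ℝ D] [MeasurableSpace D] [BorelSpace D] [SecondCountableTopology D]
    [NormedAddCommGroup V] [NormedSpace ℝ V] [NormedAddCommGroup W]
    {μ : Measure D} [μ.HasTemperateGrowth] (F : 𝓢(D, V)) {g : D → W} {s : Set D}
    (hg : AEStronglyMeasurable g (μ.restrict s)) (k : ℕ)
    (hgF : ∀ᵐ x ∂μ.restrict s, ‖g x‖ ^ 2 ≤ ‖x‖ ^ k * ‖F x‖ ^ 2) :
    MemLp g 2 (μ.restrict s) := by
  rw [memLp_two_iff_integrable_sq_norm hg]
  set C := SchwartzMap.seminorm ℝ 0 0 F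
  refine Integrable.mono' ((F.integrable_pow_mul μ k).const_mul C).restrict (hg.norm.pow 2) ?_
  filter_upwards [hgF] with x hx
  calc ‖‖g x‖ ^ 2‖ = ‖g x‖ ^ 2 := by rw [norm_pow, norm_norm]
    _ ≤ ‖x‖ ^ k * ‖F x‖ ^ 2 := hx
    _ ≤ C * (‖x‖ ^ k * ‖F x‖) := by
      rw [sq, ← mul_assoc, mul_comm C]
      gcongr
      exact F.norm_le_seminorm ℝ x

theorem sq_rpow_div_four_le {a x : ℝ} (ha : 0 ≤ a) (hax : a ≤ x ^ 2) (k : ℕ) :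
    (a ^ ((k : ℝ) / 4)) ^ 2 ≤ |x| ^ k := by
  calc (a ^ ((k : ℝ) / 4)) ^ 2 = a ^ ((k : ℝ) / 2) := by
        rw [← Real.rpow_mul_natCast ha]; ring_nf
    _ ≤ (|x| ^ 2) ^ ((k : ℝ) / 2) := by rw [sq_abs]; gcongr
    _ = |x| ^ k := by
        rw [← Real.rpow_natCast |x| 2, ← Real.rpow_mul (abs_nonneg x), ← Real.rpow_natCast]
        ring_nf

theorem ContDiffOn.contDiff_smul_of_tsupport_subset {𝕜 E F : Type*} [NontriviallyNormedField 𝕜]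
    [NormedAddCommGroup E] [NormedSpace 𝕜 E] [NormedAddCommGroup F] [NormedSpace 𝕜 F]
    {n : WithTop ℕ∞} {U : Set E} {g : E → 𝕜} {f : E → F} (hU : IsOpen U)
    (hg : ContDiffOn 𝕜 n g U) (hf : ContDiff 𝕜 n f) (hfU : tsupport f ⊆ U) :
    ContDiff 𝕜 n fun x => g x • f x := by
  refine contDiff_iff_contDiffAt.2 fun x => ?_
  by_cases hx : x ∈ tsupport f
  · exact (hg.contDiffAt (hU.mem_nhds (hfU hx))).smul hf.contDiffAt
  · refine (contDiffAt_const (c := (0 : F))).congr_of_eventuallyEq ?_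
    filter_upwards [notMem_tsupport_iff_eventuallyEq.1 hx] with y hy
    rw [hy, Pi.zero_apply, smul_zero]

theorem Zfun_apply (m : ℝ) (j : ℕ) (f : 𝓢(ℝ, ℂ)) (x : ℝ) :
    Zfun m j f x = (((x ^ 2 - m ^ 2) ^ ((2 * (j : ℝ) + 1) / 4) : ℝ) : ℂ) * (𝓕 f : 𝓢(ℝ, ℂ)) x := by
  rw [Zfun, Fourier.fourierIntegral_def, SchwartzMap.fourier_coe, Real.fourier_real_eq]

theorem Zfun_add (m : ℝ) (j : ℕ) (f g : 𝓢(ℝ, ℂ)) :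
    Zfun m j (f + g) = Zfun m j f + Zfun m j g := by
  ext x
  simp only [Zfun_apply, FourierAdd.fourier_add, add_apply, Pi.add_apply, mul_add]

theorem Zfun_smul (m : ℝ) (j : ℕ) (c : ℂ) (f : 𝓢(ℝ, ℂ)) :
    Zfun m j (c • f) = c • Zfun m j f := by
  ext x
  simp only [Zfun_apply, FourierSMul.fourier_smul, smul_apply, Pi.smul_apply, smul_eq_mul]
  ring

theorem Zfun_zero (m : ℝ) (j : ℕ) : Zfun m j 0 = 0 := by
  simpa using Zfun_smul m j 0 0

def zfunSubmodule (m : ℝ) (j : ℕ) : Submodule ℂ (Lp ℂ 2 (volume.restrict (Ioi m))) where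
  carrier := {v | ∃ f : 𝓢(ℝ, ℂ), (v : ℝ → ℂ) =ᵐ[volume.restrict (Ioi m)] Zfun m j f}
  zero_mem' := ⟨0, by rw [Zfun_zero]; exact Lp.coeFn_zero ..⟩
  add_mem' := by
    rintro v w ⟨f, hf⟩ ⟨g, hg⟩
    refine ⟨f + g, ?_⟩
    filter_upwards [Lp.coeFn_add v w, hf, hg] with x hvw hfx hgx
    rw [hvw, Zfun_add, Pi.add_apply, Pi.add_apply, hfx, hgx]
  smul_mem' := by
    rintro c v ⟨f, hf⟩
    refine ⟨c • f, ?_⟩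
    filter_upwards [Lp.coeFn_smul c v, hf] with x hcv hfx
    rw [hcv, Zfun_smul, Pi.smul_apply, Pi.smul_apply, hfx]

theorem Zfun_memLp {m : ℝ} (hm : 0 ≤ m) (j : ℕ) (f : 𝓢(ℝ, ℂ)) :
    MemLp (Zfun m j f) 2 (volume.restrict (Ioi m)) := by
  have hmeas : Measurable (Zfun m j f) := by
    rw [funext (Zfun_apply m j f)]
    fun_prop
  refine (𝓕 f : 𝓢(ℝ, ℂ)).memLp_two_restrict_of_sq_norm_le hmeas.aestronglyMeasurable
    (2 * j + 1) ?_
  filter_upwards [ae_restrict_mem measurableSet_Ioi] with x (hx : m < x)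
  rw [Zfun_apply, norm_mul, mul_pow, Complex.norm_real, Real.norm_eq_abs, sq_abs,
    Real.norm_eq_abs]
  gcongr
  exact_mod_cast sq_rpow_div_four_le (by nlinarith) (by nlinarith) (2 * j + 1)

theorem exists_Zfun_eqOn {m : ℝ} (hm : 0 ≤ m) (j : ℕ) {φ : ℝ → ℝ} (hφ : ContDiff ℝ ∞ φ)
    (hφc : HasCompactSupport φ) (hφU : tsupport φ ⊆ Ioi m) :
    ∃ f : 𝓢(ℝ, ℂ), EqOn (Zfun m j f) (fun x => (φ x : ℂ)) (Ioi m) := by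
  set α : ℝ := (2 * (j : ℝ) + 1) / 4 with hα
  have hpos : ∀ x ∈ Ioi m, 0 < x ^ 2 - m ^ 2 := fun x (hx : m < x) => by nlinarith
  have hψ : ContDiff ℝ ∞ fun x => (x ^ 2 - m ^ 2) ^ (-α) • φ x :=
    ContDiffOn.contDiff_smul_of_tsupport_subset isOpen_Ioi
      (ContDiffOn.rpow_const_of_ne (by fun_prop) fun x hx => (hpos x hx).ne') hφ hφU
  have hψc := (hφc.smul_left (f := fun x => (x ^ 2 - m ^ 2) ^ (-α))).comp_left Complex.ofReal_zero
  let ψ : 𝓢(ℝ, ℂ) := hψc.toSchwartzMap (Complex.ofRealCLM.contDiff.comp hψ)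
  refine ⟨𝓕⁻ ψ, fun x hx => ?_⟩
  rw [Zfun_apply, FourierInvPair.fourier_fourierInv_eq, ← hα]
  simp only [ψ, HasCompactSupport.toSchwartzMap_toFun, Function.comp_apply, smul_eq_mul,
    Pi.mul_apply]
  rw [← Complex.ofReal_mul, ← mul_assoc, ← Real.rpow_add (hpos x hx), add_neg_cancel,
    Real.rpow_zero, one_mul]

theorem Zfun_memL2_and_dense (m : ℝ) (hm : 0 < m) (j : ℕ) :
    (∀ f : SchwartzMap ℝ ℂ, MemLp (Zfun m j f) 2 ((volume : Measure ℝ).restrict (Set.Ioi m))) ∧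
      Dense {v : Lp ℂ 2 ((volume : Measure ℝ).restrict (Set.Ioi m)) |
        ∃ f : SchwartzMap ℝ ℂ,
          (v : ℝ → ℂ) =ᵐ[(volume : Measure ℝ).restrict (Set.Ioi m)] Zfun m j f} := by
  refine ⟨Zfun_memLp hm.le j, ?_⟩
  refine (zfunSubmodule m j).dense_of_forall_contDiff_mem isOpen_Ioi fun φ hφ hφc hφU => ?_
  obtain ⟨f, hf⟩ := exists_Zfun_eqOn hm.le j hφ hφc hφU
  have hfL2 := Zfun_memLp hm.le j f
  refine ⟨hfL2.toLp, ⟨f, hfL2.coeFn_toLp⟩, ?_⟩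
  filter_upwards [hfL2.coeFn_toLp, ae_restrict_mem measurableSet_Ioi] with x hx hxm
  exact hx.trans (hf hxm)

end
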